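/- For all ψ, φ ∈ W one has ‖Bψ − Bφ‖_{B⁰[ε,∞)} ≤ λ·‖ψ − φ‖_{B⁰[ε,∞)}; since 0 < λ < 1, the operator B : W → W is a contraction. -/

import Mathlib

/-!
The map `u ↦ u / (y + u² / s)` is `1/y`-Lipschitz on all of `ℝ`, so the integrands of `Bψ(x)` and
`Bφ(x)` differ by at most `‖ψ - φ‖ · K(x, y)` with `K(x, y) = 1 / (2 max(x, y) √(y + ε))`.
On `(ε, x]` the kernel integrates exactly to `(√(x + ε) - √(2ε)) / x`; on `(x, ∞)` it is dominated
by `(x + ε) / (2x) · (y + ε)^(-3/2)`, whose integral is `√(x + ε) / x`. The sum is at most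
`2 / √(x + ε)`, which cancels the prefactor `(λ/2) √(x + ε)`.
-/

open Real Set MeasureTheory

/-- The nonlinear integral operator `B`. -/
noncomputable def opB (lam ε : ℝ) (ψ : ℝ → ℝ) (x : ℝ) : ℝ :=
  (lam / 2) * Real.sqrt (x + ε) *
    ∫ y in Set.Ioi ε, (1 / (y + x + |y - x|)) * (y / Real.sqrt (y + ε)) *
      (ψ y / (y + (ψ y) ^ 2 / (y + ε)))

/-- Membership in `W`: bounded, continuous and nonnegative on `[ε,∞)`. -/
def memW (ε : ℝ) (ψ : ℝ → ℝ) : Prop :=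
  ContinuousOn ψ (Set.Ici ε) ∧ (∃ M : ℝ, ∀ x ∈ Set.Ici ε, |ψ x| ≤ M) ∧
    ∀ x ∈ Set.Ici ε, 0 ≤ ψ x

open Filter Topology

theorem abs_div_add_sq_div_sub_le {y s : ℝ} (hy : 0 < y) (hs : 0 < s) (u v : ℝ) :
    |u / (y + u ^ 2 / s) - v / (y + v ^ 2 / s)| ≤ |u - v| / y := by
  have hDu : 0 < y + u ^ 2 / s := by positivity
  have hDv : 0 < y + v ^ 2 / s := by positivity
  have hcross : |y - u * v / s| * y ≤ (y + u ^ 2 / s) * (y + v ^ 2 / s) := by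
    have huv : |u * v / s| ≤ (u ^ 2 + v ^ 2) / s := by
      rw [abs_div, abs_of_pos hs, abs_mul]
      gcongr
      nlinarith [sq_abs u, sq_abs v, abs_nonneg u, abs_nonneg v]
    calc |y - u * v / s| * y ≤ (y + |u * v / s|) * y := by
          gcongr; exact (abs_sub _ _).trans_eq (by rw [abs_of_pos hy])
      _ ≤ (y + (u ^ 2 + v ^ 2) / s) * y := by gcongr
      _ ≤ (y + u ^ 2 / s) * (y + v ^ 2 / s) := by
          have : 0 ≤ u ^ 2 / s * (v ^ 2 / s) := by positivity
          rw [add_div]; nlinarith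
  rw [div_sub_div _ _ hDu.ne' hDv.ne', abs_div, abs_of_pos (mul_pos hDu hDv),
    div_le_div_iff₀ (mul_pos hDu hDv) hy]
  have : u * (y + v ^ 2 / s) - (y + u ^ 2 / s) * v = (u - v) * (y - u * v / s) := by ring
  rw [this, abs_mul, mul_assoc]
  gcongr

theorem add_add_abs_sub_eq_two_mul_max (x y : ℝ) : y + x + |y - x| = 2 * max x y := by
  rcases le_total x y with h | h
  · rw [abs_of_nonneg (sub_nonneg.2 h), max_eq_right h]; ring
  · rw [abs_of_nonpos (sub_nonpos.2 h), max_eq_left h]; ring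

section

variable {lam ε x y : ℝ} {ψ φ : ℝ → ℝ}

theorem hasDerivAt_sqrt_add (hy : 0 < y + ε) :
    HasDerivAt (fun y => √(y + ε)) (1 / (2 * √(y + ε))) y := by
  simpa using ((hasDerivAt_id y).add_const ε).sqrt hy.ne'

theorem integral_one_div_sqrt_add {a b : ℝ} (ha : 0 < a + ε) (hab : a ≤ b) :
    ∫ y in a..b, 1 / √(y + ε) = 2 * (√(b + ε) - √(a + ε)) := by
  have hpos : ∀ y ∈ uIcc a b, 0 < y + ε := fun y hy => by
    rw [uIcc_of_le hab] at hy; linarith [hy.1]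
  have hcont : ContinuousOn (fun y => 1 / √(y + ε)) (uIcc a b) :=
    continuousOn_const.div (by fun_prop) fun y hy => (sqrt_pos.2 (hpos y hy)).ne'
  rw [intervalIntegral.integral_eq_sub_of_hasDerivAt (f := fun y => 2 * √(y + ε))
    (fun y hy => ((hasDerivAt_sqrt_add (hpos y hy)).const_mul 2).congr_deriv ?_)
    hcont.intervalIntegrable]
  · ring
  · have := (sqrt_pos.2 (hpos y hy)).ne'
    field_simp

theorem integrableOn_Ioi_and_integral_one_div_mul_sqrt_add {a : ℝ} (ha : 0 < a + ε) :
    IntegrableOn (fun y => 1 / ((y + ε) * √(y + ε))) (Ioi a) ∧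
      ∫ y in Ioi a, 1 / ((y + ε) * √(y + ε)) = 2 / √(a + ε) := by
  have hpos : ∀ y ∈ Ici a, 0 < y + ε := fun y hy => by linarith [mem_Ici.1 hy]
  have hderiv : ∀ y ∈ Ici a,
      HasDerivAt (fun y => -2 * (√(y + ε))⁻¹) (1 / ((y + ε) * √(y + ε))) y := by
    intro y hy
    have hs := sqrt_pos.2 (hpos y hy)
    refine (((hasDerivAt_sqrt_add (hpos y hy)).inv hs.ne').const_mul (-2)).congr_deriv ?_
    field_simp
    rw [sq_sqrt (hpos y hy).le, div_self (hpos y hy).ne']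
  have hnonneg : ∀ y ∈ Ioi a, 0 ≤ 1 / ((y + ε) * √(y + ε)) := fun y hy => by
    have := hpos y (Ioi_subset_Ici_self hy); positivity
  have hlim : Tendsto (fun y => -2 * (√(y + ε))⁻¹) atTop (𝓝 0) := by
    simpa using (tendsto_inv_atTop_zero.comp
      (tendsto_sqrt_atTop.comp (tendsto_atTop_add_const_right _ ε tendsto_id))).const_mul (-2)
  refine ⟨integrableOn_Ioi_deriv_of_nonneg' hderiv hnonneg hlim, ?_⟩
  rw [integral_Ioi_of_hasDerivAt_of_nonneg' hderiv hnonneg hlim]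
  ring

noncomputable def opBKernel (ε x y : ℝ) : ℝ := 1 / ((y + x + |y - x|) * √(y + ε))

theorem opBKernel_nonneg (hy : 0 ≤ y) : 0 ≤ opBKernel ε x y := by
  unfold opBKernel
  rw [add_add_abs_sub_eq_two_mul_max]
  have : 0 ≤ max x y := le_max_of_le_right hy
  positivity

theorem measurable_opBKernel : Measurable (opBKernel ε x) := by
  unfold opBKernel; fun_prop

theorem opBKernel_of_le (hyx : y ≤ x) : opBKernel ε x y = 1 / (2 * x) * (1 / √(y + ε)) := by
  rw [opBKernel, add_add_abs_sub_eq_two_mul_max, max_eq_left hyx, one_div_mul_one_div]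

theorem opBKernel_le_of_le (hε : 0 ≤ ε) (hx : 0 < x) (hxy : x ≤ y) :
    opBKernel ε x y ≤ (x + ε) / (2 * x) * (1 / ((y + ε) * √(y + ε))) := by
  have hy : 0 < y := hx.trans_le hxy
  have hs : 0 < √(y + ε) := sqrt_pos.2 (by linarith)
  have hcross : x * (y + ε) ≤ y * (x + ε) := by nlinarith [mul_le_mul_of_nonneg_left hxy hε]
  rw [opBKernel, add_add_abs_sub_eq_two_mul_max, max_eq_right hxy, mul_one_div, div_div,
    div_le_div_iff₀ (by positivity) (by positivity)]
  nlinarith [mul_le_mul_of_nonneg_left hcross hs.le]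

theorem integrableOn_Ioc_opBKernel (hε : 0 < ε) :
    IntegrableOn (opBKernel ε x) (Ioc ε x) := by
  have hc : ContinuousOn (fun y => 1 / (2 * x) * (1 / √(y + ε))) (Icc ε x) :=
    continuousOn_const.mul (continuousOn_const.div (by fun_prop)
      fun y hy => (sqrt_pos.2 (by linarith [hy.1])).ne')
  exact (hc.integrableOn_Icc.mono_set Ioc_subset_Icc_self).congr_fun
    (fun y hy => (opBKernel_of_le hy.2).symm) measurableSet_Ioc

theorem integral_Ioc_opBKernel (hε : 0 < ε) (hx : ε ≤ x) :
    ∫ y in Ioc ε x, opBKernel ε x y = (√(x + ε) - √(2 * ε)) / x := by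
  have hx0 : x ≠ 0 := (hε.trans_le hx).ne'
  rw [setIntegral_congr_fun measurableSet_Ioc (fun y hy => opBKernel_of_le hy.2),
    ← intervalIntegral.integral_of_le hx, intervalIntegral.integral_const_mul,
    integral_one_div_sqrt_add (by linarith) hx, ← two_mul]
  field_simp

theorem integrableOn_Ioi_opBKernel (hε : 0 ≤ ε) (hx : 0 < x) :
    IntegrableOn (opBKernel ε x) (Ioi x) := by
  have hmaj := (integrableOn_Ioi_and_integral_one_div_mul_sqrt_add (ε := ε) (a := x)
    (by linarith)).1
  refine Integrable.mono' (hmaj.const_mul ((x + ε) / (2 * x)))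
    measurable_opBKernel.aestronglyMeasurable ?_
  refine (ae_restrict_iff' measurableSet_Ioi).2 (ae_of_all _ fun y (hy : x < y) => ?_)
  rw [Real.norm_of_nonneg (opBKernel_nonneg (hx.trans hy).le)]
  exact opBKernel_le_of_le hε hx hy.le

theorem integral_Ioi_opBKernel_le (hε : 0 ≤ ε) (hx : 0 < x) :
    ∫ y in Ioi x, opBKernel ε x y ≤ √(x + ε) / x := by
  obtain ⟨hint, hval⟩ :=
    integrableOn_Ioi_and_integral_one_div_mul_sqrt_add (ε := ε) (a := x) (by linarith)
  calc ∫ y in Ioi x, opBKernel ε x y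
      ≤ ∫ y in Ioi x, (x + ε) / (2 * x) * (1 / ((y + ε) * √(y + ε))) :=
        setIntegral_mono_on (integrableOn_Ioi_opBKernel hε hx) (hint.const_mul _)
          measurableSet_Ioi fun y hy => opBKernel_le_of_le hε hx hy.le
    _ = √(x + ε) / x := by
        have hs : 0 < √(x + ε) := sqrt_pos.2 (by linarith)
        rw [integral_const_mul, hval]
        field_simp
        rw [sq_sqrt (by linarith)]

theorem integrableOn_opBKernel (hε : 0 < ε) (hx : ε ≤ x) :
    IntegrableOn (opBKernel ε x) (Ioi ε) := by
  rw [← Ioc_union_Ioi_eq_Ioi hx]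
  exact (integrableOn_Ioc_opBKernel hε).union
    (integrableOn_Ioi_opBKernel hε.le (hε.trans_le hx))

theorem integral_opBKernel_le (hε : 0 < ε) (hx : ε ≤ x) :
    ∫ y in Ioi ε, opBKernel ε x y ≤ 2 / √(x + ε) := by
  have hx0 : 0 < x := hε.trans_le hx
  have hs : 0 < √(x + ε) := sqrt_pos.2 (by linarith)
  have h2ε : √(2 * ε) * √(x + ε) ≥ 2 * ε := by
    calc √(2 * ε) * √(x + ε) ≥ √(2 * ε) * √(2 * ε) := by gcongr; linarith
      _ = 2 * ε := mul_self_sqrt (by linarith)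
  rw [← Ioc_union_Ioi_eq_Ioi hx, setIntegral_union (Ioc_disjoint_Ioi le_rfl) measurableSet_Ioi
    (integrableOn_Ioc_opBKernel hε) (integrableOn_Ioi_opBKernel hε.le hx0),
    integral_Ioc_opBKernel hε hx]
  calc (√(x + ε) - √(2 * ε)) / x + ∫ y in Ioi x, opBKernel ε x y
      ≤ (√(x + ε) - √(2 * ε)) / x + √(x + ε) / x := by
        gcongr; exact integral_Ioi_opBKernel_le hε.le hx0
    _ ≤ 2 / √(x + ε) := by
        -- this reduces to `2ε ≤ √(2ε) √(x + ε)`, an equality at `x = ε`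
        rw [← add_div, div_le_div_iff₀ hx0 hs]
        nlinarith [mul_self_sqrt (by linarith : (0:ℝ) ≤ x + ε)]

noncomputable def opBIntegrand (ε x : ℝ) (ψ : ℝ → ℝ) (y : ℝ) : ℝ :=
  (1 / (y + x + |y - x|)) * (y / √(y + ε)) * (ψ y / (y + ψ y ^ 2 / (y + ε)))

theorem opB_eq_integral_opBIntegrand :
    opB lam ε ψ x = lam / 2 * √(x + ε) * ∫ y in Ioi ε, opBIntegrand ε x ψ y := rfl

theorem opBIntegrand_eq (ψ : ℝ → ℝ) (y : ℝ) :
    opBIntegrand ε x ψ y = y * opBKernel ε x y * (ψ y / (y + ψ y ^ 2 / (y + ε))) := by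
  simp only [opBIntegrand, opBKernel, one_div, mul_inv]; ring

theorem abs_opBIntegrand_sub_le (hy : 0 < y) (hyε : 0 < y + ε) (ψ φ : ℝ → ℝ) :
    |opBIntegrand ε x ψ y - opBIntegrand ε x φ y| ≤ |ψ y - φ y| * opBKernel ε x y := by
  have hk := opBKernel_nonneg (ε := ε) (x := x) hy.le
  rw [opBIntegrand_eq, opBIntegrand_eq, ← mul_sub, abs_mul, abs_of_nonneg (by positivity)]
  calc y * opBKernel ε x y * |ψ y / (y + ψ y ^ 2 / (y + ε)) - φ y / (y + φ y ^ 2 / (y + ε))|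
      ≤ y * opBKernel ε x y * (|ψ y - φ y| / y) := by
        gcongr; exact abs_div_add_sq_div_sub_le hy hyε _ _
    _ = |ψ y - φ y| * opBKernel ε x y := by field_simp

theorem integrableOn_opBIntegrand (hε : 0 < ε) (hx : ε ≤ x) (hψc : ContinuousOn ψ (Ici ε))
    {M : ℝ} (hM : ∀ y ∈ Ioi ε, |ψ y| ≤ M) :
    IntegrableOn (opBIntegrand ε x ψ) (Ioi ε) := by
  have hψm : AEMeasurable ψ (volume.restrict (Ioi ε)) :=
    ((hψc.mono Ioi_subset_Ici_self).aestronglyMeasurable measurableSet_Ioi).aemeasurable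
  refine Integrable.mono' ((integrableOn_opBKernel hε hx).const_mul M)
    (by unfold opBIntegrand; fun_prop : AEMeasurable _ _).aestronglyMeasurable ?_
  refine (ae_restrict_iff' measurableSet_Ioi).2 (ae_of_all _ fun y (hy : ε < y) => ?_)
  have hzero : opBIntegrand ε x (fun _ => 0) y = 0 := by simp [opBIntegrand]
  calc ‖opBIntegrand ε x ψ y‖ = |opBIntegrand ε x ψ y - opBIntegrand ε x (fun _ => 0) y| := by
        rw [hzero, sub_zero, Real.norm_eq_abs]
    _ ≤ |ψ y - 0| * opBKernel ε x y := abs_opBIntegrand_sub_le (by linarith) (by linarith) _ _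
    _ ≤ M * opBKernel ε x y := by
        rw [sub_zero]; exact mul_le_mul_of_nonneg_right (hM y hy) (opBKernel_nonneg (by linarith))

theorem abs_opB_sub_opB_le (hlam : 0 ≤ lam) (hε : 0 < ε) (hx : ε ≤ x)
    (hψ : IntegrableOn (opBIntegrand ε x ψ) (Ioi ε))
    (hφ : IntegrableOn (opBIntegrand ε x φ) (Ioi ε))
    {S : ℝ} (hS : ∀ y ∈ Ioi ε, |ψ y - φ y| ≤ S) :
    |opB lam ε ψ x - opB lam ε φ x| ≤ lam * S := by
  have hS0 : 0 ≤ S := (abs_nonneg _).trans (hS (ε + 1) (by simp))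
  have hs : 0 < √(x + ε) := sqrt_pos.2 (by linarith)
  have hdiff : |(∫ y in Ioi ε, opBIntegrand ε x ψ y) - ∫ y in Ioi ε, opBIntegrand ε x φ y|
      ≤ S * (2 / √(x + ε)) := by
    rw [← integral_sub hψ hφ]
    calc |∫ y in Ioi ε, (opBIntegrand ε x ψ y - opBIntegrand ε x φ y)|
        ≤ ∫ y in Ioi ε, |opBIntegrand ε x ψ y - opBIntegrand ε x φ y| :=
          abs_integral_le_integral_abs
      _ ≤ ∫ y in Ioi ε, S * opBKernel ε x y :=
          setIntegral_mono_on (hψ.sub hφ).abs ((integrableOn_opBKernel hε hx).const_mul S)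
            measurableSet_Ioi fun y (hy : ε < y) =>
              (abs_opBIntegrand_sub_le (by linarith) (by linarith) ψ φ).trans
                (mul_le_mul_of_nonneg_right (hS y hy) (opBKernel_nonneg (by linarith)))
      _ = S * ∫ y in Ioi ε, opBKernel ε x y := integral_const_mul _ _
      _ ≤ S * (2 / √(x + ε)) := by gcongr; exact integral_opBKernel_le hε hx
  rw [opB_eq_integral_opBIntegrand, opB_eq_integral_opBIntegrand, ← mul_sub, abs_mul,
    abs_of_nonneg (by positivity)]
  calc lam / 2 * √(x + ε) * |(∫ y in Ioi ε, opBIntegrand ε x ψ y) -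
        ∫ y in Ioi ε, opBIntegrand ε x φ y|
      ≤ lam / 2 * √(x + ε) * (S * (2 / √(x + ε))) := by gcongr
    _ = lam * S := by field_simp

end

theorem stmt_18_general (ε lam : ℝ) (hε : 0 < ε) (hlam0 : 0 < lam)
    (ψ φ : ℝ → ℝ) (hψ : memW ε ψ) (hφ : memW ε φ) :
    sSup ((fun x => |opB lam ε ψ x - opB lam ε φ x|) '' Set.Ici ε) ≤
      lam * sSup ((fun x => |ψ x - φ x|) '' Set.Ici ε) := by
  obtain ⟨hψc, ⟨Mψ, hMψ⟩, -⟩ := hψ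
  obtain ⟨hφc, ⟨Mφ, hMφ⟩, -⟩ := hφ
  have hbdd : BddAbove ((fun x => |ψ x - φ x|) '' Ici ε) := by
    refine ⟨Mψ + Mφ, ?_⟩
    rintro _ ⟨y, hy, rfl⟩
    exact (abs_sub _ _).trans (add_le_add (hMψ y hy) (hMφ y hy))
  have hS : ∀ y ∈ Ioi ε, |ψ y - φ y| ≤ sSup ((fun x => |ψ x - φ x|) '' Ici ε) :=
    fun y hy => le_csSup hbdd (mem_image_of_mem _ (Ioi_subset_Ici_self hy))
  refine Real.sSup_le ?_ (mul_nonneg hlam0.le (Real.sSup_nonneg ?_))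
  · rintro _ ⟨x, hx, rfl⟩
    exact abs_opB_sub_opB_le hlam0.le hε hx
      (integrableOn_opBIntegrand hε hx hψc fun y hy => hMψ y (Ioi_subset_Ici_self hy))
      (integrableOn_opBIntegrand hε hx hφc fun y hy => hMφ y (Ioi_subset_Ici_self hy)) hS
  · rintro _ ⟨y, -, rfl⟩
    exact abs_nonneg _

theorem stmt_18 (ε lam : ℝ) (hε : 0 < ε) (hlam0 : 0 < lam) (hlam1 : lam < 1)
    (ψ φ : ℝ → ℝ) (hψ : memW ε ψ) (hφ : memW ε φ) :
    sSup ((fun x => |opB lam ε ψ x - opB lam ε φ x|) '' Set.Ici ε) ≤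
      lam * sSup ((fun x => |ψ x - φ x|) '' Set.Ici ε) :=
  stmt_18_general ε lam hε hlam0 ψ φ hψ hφ
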